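/- Sandwich form of the monotonicity relations: For q₀, q₁ ∈ L^∞₊(Ω), the operator inequalities Λ'(q₀)(q₁ − q₀) ≥ Λ(q₁) − Λ(q₀) ≥ Λ'(q₀)((q₀/q₁)(q₁ − q₀)) hold in the sense of quadratic forms, where ⟨(Λ'(q₀)r)F, F⟩ = ∫_Ω r |S_{q₀}(F)|² dx. -/

import Mathlib

open MeasureTheory Filter Topology FourierTransform SchwartzMap

variable {n : ℕ}

noncomputable section

abbrev Euc (n : ℕ) := EuclideanSpace ℝ (Fin n)

/-- The fractional Laplacian `(-Δ)^s` of a complex-valued function, defined via the Fourier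
transform as `𝓕⁻(|ξ|^{2s} 𝓕 u)`. (The defining integrals are honest Bochner integrals for
Schwartz functions, which is the only case in which this pointwise formula is used below.) -/
def fracLapC (s : ℝ) (u : Euc n → ℂ) : Euc n → ℂ :=
  𝓕⁻ (fun ξ => ((‖ξ‖ ^ (2 * s) : ℝ) : ℂ) • 𝓕 u ξ)

/-- The fractional Laplacian `(-Δ)^s` of a real-valued function. -/
def fracLapR (s : ℝ) (u : Euc n → ℝ) : Euc n → ℝ :=
  fun x => (fracLapC s (fun y => (u y : ℂ)) x).re

/-- `g = (-Δ)^s u` in the sense of tempered distributions: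
`∫ u · (-Δ)^s φ = ∫ g · φ` for every (real-valued) Schwartz function `φ`. -/
def IsFracLap (s : ℝ) (u g : Euc n → ℝ) : Prop :=
  ∀ φ : 𝓢(Euc n, ℝ), ∫ x, u x * fracLapR s (⇑φ) x = ∫ x, g x * φ x

/-- `u ∈ Hˢ(ℝⁿ)` with `(-Δ)^{s/2} u = g`: both `u` and `g` are in `L²`, and `g` is the
distributional fractional Laplacian of order `s/2` of `u`. -/
def MemHs (s : ℝ) (u g : Euc n → ℝ) : Prop :=
  MemLp u 2 (volume : Measure (Euc n)) ∧ MemLp g 2 (volume : Measure (Euc n)) ∧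
    IsFracLap (s / 2) u g

/-- `v ∈ H₀ˢ(Ω)` (with `(-Δ)^{s/2} v = gv`): `v ∈ Hˢ(ℝⁿ)` and `v` is the `Hˢ`-limit of a
sequence of smooth compactly supported functions with support in `Ω`. -/
def MemH0s (s : ℝ) (Ω : Set (Euc n)) (v gv : Euc n → ℝ) : Prop :=
  MemHs s v gv ∧
  ∃ φ : ℕ → Euc n → ℝ,
    (∀ k, ContDiff ℝ (⊤ : ℕ∞) (φ k) ∧ HasCompactSupport (φ k) ∧ tsupport (φ k) ⊆ Ω) ∧
    Tendsto (fun k => (∫ x, (φ k x - v x) ^ 2) +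
      ∫ x, (fracLapR (s / 2) (φ k) x - gv x) ^ 2) atTop (nhds 0)

/-- The bilinear form `B_q(u, w) = ∫_{ℝⁿ} (-Δ)^{s/2}u · (-Δ)^{s/2}w dx + ∫_Ω q u w dx`,
expressed in terms of the fractional derivatives `gu = (-Δ)^{s/2}u`, `gw = (-Δ)^{s/2}w`. -/
def Bq (Ω : Set (Euc n)) (q : Euc n → ℝ) (u gu w gw : Euc n → ℝ) : ℝ :=
  (∫ x, gu x * gw x) + ∫ x in Ω, q x * u x * w x

end

open MeasureTheory in
/-- An `L^∞` function is a.e. bounded. -/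
lemma memtop_ae_bound {α : Type*} [MeasurableSpace α] {μ : Measure α} {f : α → ℝ}
    (hf : MemLp f ⊤ μ) : ∃ M : ℝ, 0 ≤ M ∧ ∀ᵐ x ∂μ, |f x| ≤ M := by
  refine ⟨(eLpNormEssSup f μ).toReal, ENNReal.toReal_nonneg, ?_⟩
  have hne : eLpNormEssSup f μ ≠ ⊤ := by
    have h2 := hf.2
    rwa [eLpNorm_exponent_top, lt_top_iff_ne_top] at h2
  filter_upwards [ae_le_eLpNormEssSup (f := f) (μ := μ)] with x hx
  have := ENNReal.toReal_mono hne hx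
  simpa [Real.norm_eq_abs] using this

open MeasureTheory in
/-- Product of two `L²` functions is integrable. -/
lemma l2_mul_integrable {α : Type*} [MeasurableSpace α] {μ : Measure α} {f g : α → ℝ}
    (hf : MemLp f 2 μ) (hg : MemLp g 2 μ) : Integrable (fun x => f x * g x) μ := by
  rw [← memLp_one_iff_integrable]
  have h := hg.smul hf (p := 2) (q := 2) (r := 1)
    (hpqr := ⟨by rw [inv_one]; exact ENNReal.inv_two_add_inv_two⟩)
  exact h

open MeasureTheory Filter Topology in
/-- Sandwich form of the monotonicity relations:
`Λ'(q₀)(q₁ - q₀) ≥ Λ(q₁) - Λ(q₀) ≥ Λ'(q₀)((q₀/q₁)(q₁ - q₀))` in the sense of quadratic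
forms. For the exterior datum `F`, `uⱼ` denotes the solution for the potential `qⱼ`
(so `u₁ - u₀ ∈ H₀ˢ(Ω)` expresses that both have exterior value `F`); the quadratic form
values are `⟨Λ(qⱼ)F, F⟩ = B_{qⱼ}(uⱼ, uⱼ)` and
`⟨(Λ'(q₀)r)F, F⟩ = ∫_Ω r |S_{q₀}(F)|² dx = ∫_Ω r |u₀|² dx`. -/
theorem sandwich_monotonicity
    {n : ℕ} (Ω : Set (Euc n)) (hΩ : IsOpen Ω) (hΩb : Bornology.IsBounded Ω)
    (s : ℝ) (hs0 : 0 < s) (hs1 : s < 1)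
    (q₀ q₁ : Euc n → ℝ)
    (hq₀ : MemLp q₀ ⊤ (volume.restrict Ω)) (hq₁ : MemLp q₁ ⊤ (volume.restrict Ω))
    (hq₀pos : ∃ c > (0 : ℝ), ∀ᵐ x ∂volume.restrict Ω, c ≤ q₀ x)
    (hq₁pos : ∃ c > (0 : ℝ), ∀ᵐ x ∂volume.restrict Ω, c ≤ q₁ x)
    (u₀ gu₀ u₁ gu₁ : Euc n → ℝ)
    (hu₀ : MemHs s u₀ gu₀) (hu₁ : MemHs s u₁ gu₁)
    (hF : MemH0s s Ω (fun x => u₁ x - u₀ x) (fun x => gu₁ x - gu₀ x))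
    (hsol₀ : ∀ w gw : Euc n → ℝ, MemH0s s Ω w gw → Bq Ω q₀ u₀ gu₀ w gw = 0)
    (hsol₁ : ∀ w gw : Euc n → ℝ, MemH0s s Ω w gw → Bq Ω q₁ u₁ gu₁ w gw = 0) :
    (∫ x in Ω, q₀ x / q₁ x * (q₁ x - q₀ x) * (u₀ x) ^ 2) ≤
        Bq Ω q₁ u₁ gu₁ u₁ gu₁ - Bq Ω q₀ u₀ gu₀ u₀ gu₀ ∧
      Bq Ω q₁ u₁ gu₁ u₁ gu₁ - Bq Ω q₀ u₀ gu₀ u₀ gu₀ ≤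
        ∫ x in Ω, (q₁ x - q₀ x) * (u₀ x) ^ 2 := by

  classical
  obtain ⟨hu0L2, hgu0L2, -⟩ := hu₀
  obtain ⟨hu1L2, hgu1L2, -⟩ := hu₁
  obtain ⟨c₁, hc₁pos, hq₁ae⟩ := hq₁pos
  obtain ⟨M₀, hM₀0, hM₀⟩ := memtop_ae_bound hq₀
  obtain ⟨M₁, hM₁0, hM₁⟩ := memtop_ae_bound hq₁
  -- integrability of the "gradient" atoms
  have hA : Integrable (fun x => gu₀ x * gu₀ x) volume := l2_mul_integrable hgu0L2 hgu0L2
  have hB : Integrable (fun x => gu₀ x * gu₁ x) volume := l2_mul_integrable hgu0L2 hgu1L2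
  have hC : Integrable (fun x => gu₁ x * gu₁ x) volume := l2_mul_integrable hgu1L2 hgu1L2
  -- integrability of the potential atoms
  have hQ : ∀ q : Euc n → ℝ, MemLp q ⊤ (volume.restrict Ω) → ∀ u v : Euc n → ℝ,
      MemLp u 2 (volume : Measure (Euc n)) → MemLp v 2 (volume : Measure (Euc n)) →
      Integrable (fun x => q x * u x * v x) (volume.restrict Ω) := by
    intro q hq u v hu hv
    have h1 : MemLp (fun x => q x * u x) 2 (volume.restrict Ω) := by
      have := (hu.restrict Ω).smul hq (r := 2)
      exact this
    exact l2_mul_integrable h1 (hv.restrict Ω)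
  have hP00 := hQ q₀ hq₀ u₀ u₀ hu0L2 hu0L2
  have hP01 := hQ q₀ hq₀ u₀ u₁ hu0L2 hu1L2
  have hR00 := hQ q₁ hq₁ u₀ u₀ hu0L2 hu0L2
  have hR01 := hQ q₁ hq₁ u₁ u₀ hu1L2 hu0L2
  have hR11 := hQ q₁ hq₁ u₁ u₁ hu1L2 hu1L2
  -- the two weak formulations tested against w = u₁ - u₀
  have h0 : ((∫ x, gu₀ x * gu₁ x) - ∫ x, gu₀ x * gu₀ x) +
      ((∫ x in Ω, q₀ x * u₀ x * u₁ x) - ∫ x in Ω, q₀ x * u₀ x * u₀ x) = 0 := by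
    have h := hsol₀ _ _ hF
    simp only [Bq] at h
    simp_rw [mul_sub] at h
    rwa [integral_sub hB hA, integral_sub hP01 hP00] at h
  have hB' : Integrable (fun x => gu₁ x * gu₀ x) volume := l2_mul_integrable hgu1L2 hgu0L2
  have hBcomm : (∫ x, gu₁ x * gu₀ x) = ∫ x, gu₀ x * gu₁ x := by
    congr 1; funext x; ring
  have h1 : ((∫ x, gu₁ x * gu₁ x) - ∫ x, gu₀ x * gu₁ x) +
      ((∫ x in Ω, q₁ x * u₁ x * u₁ x) - ∫ x in Ω, q₁ x * u₁ x * u₀ x) = 0 := by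
    have h := hsol₁ _ _ hF
    simp only [Bq] at h
    simp_rw [mul_sub] at h
    rwa [integral_sub hC hB', integral_sub hR11 hR01, hBcomm] at h
  -- nonnegativity of ∫ |(-Δ)^{s/2}(u₁-u₀)|²
  have hSg : 0 ≤ (∫ x, gu₁ x * gu₁ x) - 2 * (∫ x, gu₀ x * gu₁ x) + ∫ x, gu₀ x * gu₀ x := by
    have hnn : 0 ≤ ∫ x, (gu₁ x - gu₀ x) ^ 2 := integral_nonneg fun x => sq_nonneg _
    have hexp : (∫ x, (gu₁ x - gu₀ x) ^ 2) =
        (∫ x, gu₁ x * gu₁ x) - 2 * (∫ x, gu₀ x * gu₁ x) + ∫ x, gu₀ x * gu₀ x := by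
      rw [show (fun x => (gu₁ x - gu₀ x) ^ 2) =
          fun x => (gu₁ x * gu₁ x - 2 * (gu₀ x * gu₁ x)) + gu₀ x * gu₀ x from by
        funext x; ring]
      rw [integral_add (show Integrable (fun x => gu₁ x * gu₁ x - 2 * (gu₀ x * gu₁ x)) volume from hC.sub (hB.const_mul 2)) hA, integral_sub hC (hB.const_mul 2),
        integral_const_mul]
    linarith [hexp ▸ hnn]
  -- nonnegativity of ∫ q₁ (u₁-u₀)²
  have hSq1 : 0 ≤ (∫ x in Ω, q₁ x * u₁ x * u₁ x) - 2 * (∫ x in Ω, q₁ x * u₁ x * u₀ x) +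
      ∫ x in Ω, q₁ x * u₀ x * u₀ x := by
    have hnn : 0 ≤ ∫ x in Ω, q₁ x * (u₁ x - u₀ x) ^ 2 := by
      refine integral_nonneg_of_ae ?_
      filter_upwards [hq₁ae] with x hx
      exact mul_nonneg (le_trans hc₁pos.le hx) (sq_nonneg _)
    have hexp : (∫ x in Ω, q₁ x * (u₁ x - u₀ x) ^ 2) =
        (∫ x in Ω, q₁ x * u₁ x * u₁ x) - 2 * (∫ x in Ω, q₁ x * u₁ x * u₀ x) +
          ∫ x in Ω, q₁ x * u₀ x * u₀ x := by
      rw [show (fun x => q₁ x * (u₁ x - u₀ x) ^ 2) =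
          fun x => (q₁ x * u₁ x * u₁ x - 2 * (q₁ x * u₁ x * u₀ x)) + q₁ x * u₀ x * u₀ x from by
        funext x; ring]
      rw [integral_add (show Integrable (fun x => q₁ x * u₁ x * u₁ x - 2 * (q₁ x * u₁ x * u₀ x)) (volume.restrict Ω) from hR11.sub (hR01.const_mul 2)) hR00, integral_sub hR11 (hR01.const_mul 2),
        integral_const_mul]
    linarith [hexp ▸ hnn]
  -- the target integral for the upper bound
  have hgoal2 : (∫ x in Ω, (q₁ x - q₀ x) * u₀ x ^ 2) =
      (∫ x in Ω, q₁ x * u₀ x * u₀ x) - ∫ x in Ω, q₀ x * u₀ x * u₀ x := by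
    rw [show (fun x => (q₁ x - q₀ x) * u₀ x ^ 2) =
        fun x => q₁ x * u₀ x * u₀ x - q₀ x * u₀ x * u₀ x from by funext x; ring]
    rw [integral_sub hR00 hP00]
  -- pointwise/integral comparison for the lower bound
  have hL : Integrable (fun x => q₀ x / q₁ x * (q₁ x - q₀ x) * u₀ x ^ 2)
      (volume.restrict Ω) := by
    refine Integrable.mono'
      (((l2_mul_integrable (hu0L2.restrict Ω) (hu0L2.restrict Ω)).const_mul
        (M₀ / c₁ * (M₁ + M₀)))) ?_ ?_
    · have m0 := hq₀.1.aemeasurable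
      have m1 := hq₁.1.aemeasurable
      have mu := (hu0L2.restrict Ω).1.aemeasurable
      exact (((m0.div m1).mul (m1.sub m0)).mul (mu.mul mu)).aestronglyMeasurable.congr
        (Filter.Eventually.of_forall fun x => by simp only [Pi.mul_apply, Pi.div_apply, Pi.sub_apply, Pi.pow_apply]; ring)
    · filter_upwards [hM₀, hM₁, hq₁ae] with x h0x h1x hcx
      have e1 : |q₀ x / q₁ x| ≤ M₀ / c₁ := by
        rw [abs_div]
        exact div_le_div₀ hM₀0 h0x hc₁pos (le_trans hcx (le_abs_self _))
      have a0 := abs_le.mp h0x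
      have a1 := abs_le.mp h1x
      have e2 : |q₁ x - q₀ x| ≤ M₁ + M₀ :=
        abs_le.mpr ⟨by linarith [a0.1, a0.2, a1.1, a1.2], by linarith [a0.1, a0.2, a1.1, a1.2]⟩
      calc ‖q₀ x / q₁ x * (q₁ x - q₀ x) * u₀ x ^ 2‖
          = |q₀ x / q₁ x| * |q₁ x - q₀ x| * (u₀ x * u₀ x) := by
            rw [Real.norm_eq_abs, abs_mul, abs_mul, abs_of_nonneg (sq_nonneg (u₀ x))]; ring
        _ ≤ M₀ / c₁ * (M₁ + M₀) * (u₀ x * u₀ x) :=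
            mul_le_mul_of_nonneg_right
              (mul_le_mul e1 e2 (abs_nonneg _) (div_nonneg hM₀0 hc₁pos.le))
              (mul_self_nonneg _)
  have hmexp : (∫ x in Ω, ((q₁ x * u₁ x * u₁ x - 2 * (q₀ x * u₀ x * u₁ x)) +
      q₀ x * u₀ x * u₀ x)) =
      (∫ x in Ω, q₁ x * u₁ x * u₁ x) - 2 * (∫ x in Ω, q₀ x * u₀ x * u₁ x) +
        ∫ x in Ω, q₀ x * u₀ x * u₀ x := by
    rw [integral_add (show Integrable (fun x => q₁ x * u₁ x * u₁ x - 2 * (q₀ x * u₀ x * u₁ x)) (volume.restrict Ω) from hR11.sub (hP01.const_mul 2)) hP00, integral_sub hR11 (hP01.const_mul 2),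
      integral_const_mul]
  have hmono : (∫ x in Ω, q₀ x / q₁ x * (q₁ x - q₀ x) * u₀ x ^ 2) ≤
      (∫ x in Ω, q₁ x * u₁ x * u₁ x) - 2 * (∫ x in Ω, q₀ x * u₀ x * u₁ x) +
        ∫ x in Ω, q₀ x * u₀ x * u₀ x := by
    rw [← hmexp]
    refine integral_mono_ae hL ((hR11.sub (hP01.const_mul 2)).add hP00) ?_
    filter_upwards [hq₁ae] with x hcx
    have hx1 : 0 < q₁ x := lt_of_lt_of_le hc₁pos hcx
    rw [div_mul_eq_mul_div, div_mul_eq_mul_div, div_le_iff₀ hx1]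
    nlinarith [sq_nonneg (q₁ x * u₁ x - q₀ x * u₀ x)]
  simp only [Bq]
  constructor
  · linarith
  · rw [hgoal2]
    linarith
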